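/- For 0<t<T and z>0, the function F_{tT}(y;z) = Φ(c(Ty−tz)/√(yz(z−y))) + (1 − 2t/T) e^{2c²t(T−t)/z} Φ(c((2t−T)y−tz)/√(yz(z−y))) is an antiderivative on (0,z) of the bridge density f_{tT}(·;z), i.e. ∂F_{tT}(y;z)/∂y = f_{tT}(y;z) for 0<y<z. -/

import Mathlib

open MeasureTheory Real Set

/-- The standard normal cumulative distribution function. -/
noncomputable def stdNormalCDF (x : ℝ) : ℝ :=
  ∫ u in Set.Iic x, (Real.sqrt (2 * Real.pi))⁻¹ * Real.exp (-(u ^ 2) / 2)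

/-- The stable-1/2 bridge density. -/
noncomputable def bridgeDensity (c t T y z : ℝ) : ℝ :=
  if 0 < y ∧ y ≤ z then
    (1 / Real.sqrt (2 * Real.pi)) * (c * t * (T - t) / T) *
      Real.exp (-(c ^ 2 / 2) * (T * y - t * z) ^ 2 / (y * z * (z - y))) /
        (y - y ^ 2 / z) ^ ((3 : ℝ) / 2)
  else 0

/-- The stable-1/2 bridge distribution function. -/
noncomputable def bridgeCDF (c t T y z : ℝ) : ℝ :=
  stdNormalCDF (c * (T * y - t * z) / Real.sqrt (y * z * (z - y))) +
    (1 - 2 * t / T) * Real.exp (2 * c ^ 2 * t * (T - t) / z) *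
      stdNormalCDF (c * ((2 * t - T) * y - t * z) / Real.sqrt (y * z * (z - y)))

lemma stdNormal_integrable :
    Integrable (fun u : ℝ => (Real.sqrt (2 * Real.pi))⁻¹ * Real.exp (-(u ^ 2) / 2)) := by
  have h := (integrable_exp_neg_mul_sq (by norm_num : (0:ℝ) < 1/2)).const_mul
    (Real.sqrt (2 * Real.pi))⁻¹
  convert h using 2 with u
  ring_nf

lemma hasDerivAt_stdNormalCDF (x : ℝ) :
    HasDerivAt stdNormalCDF ((Real.sqrt (2 * Real.pi))⁻¹ * Real.exp (-(x ^ 2) / 2)) x := by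
  set f : ℝ → ℝ := fun u => (Real.sqrt (2 * Real.pi))⁻¹ * Real.exp (-(u ^ 2) / 2) with hf
  have hint := stdNormal_integrable
  have heq : ∀ b : ℝ, stdNormalCDF b = stdNormalCDF 0 + ∫ u in (0:ℝ)..b, f u := by
    intro b
    have := intervalIntegral.integral_Iic_sub_Iic (μ := volume) (f := f)
      hint.integrableOn hint.integrableOn (a := 0) (b := b)
    simp only [stdNormalCDF]
    linarith [this]
  have hd : HasDerivAt (fun b => stdNormalCDF 0 + ∫ u in (0:ℝ)..b, f u) (f x) x := by
    refine HasDerivAt.const_add _ ?_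
    refine intervalIntegral.integral_hasDerivAt_right hint.intervalIntegrable
      hint.aestronglyMeasurable.stronglyMeasurableAtFilter ?_
    exact Continuous.continuousAt (by continuity)
  have : stdNormalCDF = fun b => stdNormalCDF 0 + ∫ u in (0:ℝ)..b, f u := funext heq
  rw [this]
  exact hd

lemma rpow_three_halves {x : ℝ} (hx : 0 ≤ x) :
    x ^ ((3 : ℝ) / 2) = Real.sqrt x ^ 3 := by
  rw [Real.sqrt_eq_rpow, ← Real.rpow_natCast (x ^ ((1:ℝ)/2)) 3, ← Real.rpow_mul hx]
  norm_num

theorem bridgeCDF_hasDerivAt (c t T z : ℝ) (hc : 0 < c) (ht : 0 < t) (htT : t < T)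
    (hz : 0 < z) :
    ∀ y : ℝ, 0 < y → y < z →
      HasDerivAt (fun u : ℝ => bridgeCDF c t T u z) (bridgeDensity c t T y z) y := by
  intro y hy hyz
  have hT : 0 < T := ht.trans htT
  have hzy : 0 < z - y := sub_pos.2 hyz
  have hD : 0 < y * z * (z - y) := mul_pos (mul_pos hy hz) hzy
  set s : ℝ := Real.sqrt (y * z * (z - y)) with hs_def
  have hs : 0 < s := Real.sqrt_pos.2 hD
  have hs2 : s ^ 2 = y * z * (z - y) := Real.sq_sqrt hD.le
  have h2pi : Real.sqrt (2 * Real.pi) ≠ 0 :=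
    ne_of_gt (Real.sqrt_pos.2 (by positivity))
  -- derivative of the inner polynomial and of s
  have hpoly : HasDerivAt (fun u : ℝ => u * z * (z - u)) (z * (z - y) - y * z) y := by
    have h := ((hasDerivAt_id y).mul_const z).mul ((hasDerivAt_const y z).sub (hasDerivAt_id y))
    exact h.congr_deriv (by simp; ring)
  have hsqrt : HasDerivAt (fun u : ℝ => Real.sqrt (u * z * (z - u)))
      ((z * (z - y) - y * z) / (2 * s)) y := hpoly.sqrt hD.ne'
  -- derivative of the first composition argument
  have hnum1 : HasDerivAt (fun u : ℝ => c * (T * u - t * z)) (c * T) y := by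
    have h := (((hasDerivAt_id y).const_mul T).sub_const (t * z)).const_mul c
    exact h.congr_deriv (by ring)
  have hnum2 : HasDerivAt (fun u : ℝ => c * ((2 * t - T) * u - t * z)) (c * (2 * t - T)) y := by
    have h := (((hasDerivAt_id y).const_mul (2 * t - T)).sub_const (t * z)).const_mul c
    exact h.congr_deriv (by ring)
  have hg1raw := hnum1.div hsqrt hs.ne'
  have hg2raw := hnum2.div hsqrt hs.ne'
  have hg1 : HasDerivAt (fun u : ℝ => c * (T * u - t * z) / Real.sqrt (u * z * (z - u)))
      (c * z ^ 2 * ((T - 2 * t) * y + t * z) / (2 * s ^ 3)) y := by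
    refine hg1raw.congr_deriv ?_; symm
    have e1 : (c * T * s - c * (T * y - t * z) * ((z * (z - y) - y * z) / (2 * s))) / s ^ 2
        = (2 * c * T * s ^ 2 - c * (T * y - t * z) * (z * (z - y) - y * z)) / (2 * s ^ 3) := by
      field_simp
    rw [e1, hs2]
    congr 1
    ring
  have hg2 : HasDerivAt (fun u : ℝ => c * ((2 * t - T) * u - t * z) / Real.sqrt (u * z * (z - u)))
      (c * z ^ 2 * (t * z - T * y) / (2 * s ^ 3)) y := by
    refine hg2raw.congr_deriv ?_; symm
    have e1 : (c * (2 * t - T) * s - c * ((2 * t - T) * y - t * z) * ((z * (z - y) - y * z) / (2 * s))) / s ^ 2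
        = (2 * c * (2 * t - T) * s ^ 2 - c * ((2 * t - T) * y - t * z) * (z * (z - y) - y * z)) / (2 * s ^ 3) := by
      field_simp
    rw [e1, hs2]
    congr 1
    ring
  have hΦ1 := (hasDerivAt_stdNormalCDF (c * (T * y - t * z) / s)).comp y hg1
  have hΦ2 := (hasDerivAt_stdNormalCDF (c * ((2 * t - T) * y - t * z) / s)).comp y hg2
  have hF := hΦ1.add (hΦ2.const_mul ((1 - 2 * t / T) * Real.exp (2 * c ^ 2 * t * (T - t) / z)))
  have hkey : bridgeDensity c t T y z =
      (Real.sqrt (2 * Real.pi))⁻¹ * Real.exp (-(c * (T * y - t * z) / s) ^ 2 / 2) *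
          (c * z ^ 2 * ((T - 2 * t) * y + t * z) / (2 * s ^ 3)) +
        (1 - 2 * t / T) * Real.exp (2 * c ^ 2 * t * (T - t) / z) *
          ((Real.sqrt (2 * Real.pi))⁻¹ * Real.exp (-(c * ((2 * t - T) * y - t * z) / s) ^ 2 / 2) *
            (c * z ^ 2 * (t * z - T * y) / (2 * s ^ 3))) := by
    rw [bridgeDensity, if_pos ⟨hy, hyz.le⟩]
    -- rewrite the rpow denominator into s^3 / z^3
    have h1 : y - y ^ 2 / z = y * z * (z - y) / z ^ 2 := by field_simp
    have hpow : (y - y ^ 2 / z) ^ ((3 : ℝ) / 2) = s ^ 3 / z ^ 3 := by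
      rw [h1, rpow_three_halves (le_of_lt (div_pos hD (pow_pos hz 2))),
        Real.sqrt_div hD.le, Real.sqrt_sq hz.le, div_pow]
    rw [hpow]
    -- rewrite the exponentials
    have hE : Real.exp (-(c ^ 2 / 2) * (T * y - t * z) ^ 2 / (y * z * (z - y)))
        = Real.exp (-(c * (T * y - t * z) / s) ^ 2 / 2) := by
      congr 1
      rw [div_pow, mul_pow, hs2]
      ring
    rw [hE]
    have hE2 : Real.exp (-(c * ((2 * t - T) * y - t * z) / s) ^ 2 / 2)
        = Real.exp (-(c * (T * y - t * z) / s) ^ 2 / 2) *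
            (Real.exp (2 * c ^ 2 * t * (T - t) / z))⁻¹ := by
      rw [← Real.exp_neg, ← Real.exp_add]
      congr 1
      rw [div_pow, div_pow, mul_pow, mul_pow, hs2]
      field_simp
      ring
    rw [hE2]
    field_simp
    ring
  rw [hkey]
  exact hF
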